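/- arXiv:0707.0734 — 3 statements merged into one kernel-verified Lean document; each statement's English description precedes it below -/
import Mathlib

section
/- Suppose the sequence (p_i) is strictly positive, nonincreasing, and converges to 0. Then there exists an absolute constant C > 0 such that for all sufficiently large m, D(m,∞) ≥ C/p_m; consequently lim_{m→∞} D(m,∞) = +∞. -/
open MeasureTheory Filter Finset
open scoped ENNReal NNReal Topology

noncomputable section

namespace NNRW

/-- Probability of a step to the right from site `i`: `E 0 = 1`, `E i = 1/2 + p i` for `i ≥ 1`. -/
def E (p : ℕ → ℝ) (i : ℕ) : ℝ := if i = 0 then 1 else 1 / 2 + p i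

/-- One-step transition probability of the nearest-neighbour walk, from `i` to `j`. -/
def step (p : ℕ → ℝ) (i j : ℕ) : ℝ :=
  if j = i + 1 then E p i else if j + 1 = i then 1 - E p i else 0

/-- `X` is (distributed as) the nearest-neighbour Markov chain with parameters `p`, started
at `b`, under the probability measure `P`: `X 0 = b` and the finite-dimensional
distributions are the products of the one-step transition probabilities. -/
def IsNNWalk {Ω : Type*} [MeasurableSpace Ω] (P : Measure Ω)
    (X : ℕ → Ω → ℕ) (p : ℕ → ℝ) (b : ℕ) : Prop :=
  (∀ ω, X 0 ω = b) ∧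
    ∀ (n : ℕ) (u : ℕ → ℕ), u 0 = b →
      P {ω | ∀ k ≤ n, X k ω = u k} =
        ENNReal.ofReal (∏ k ∈ Finset.range n, step p (u k) (u (k + 1)))

/-- `U i = (1/2 - p i)/(1/2 + p i)`. -/
def U (p : ℕ → ℝ) (i : ℕ) : ℝ := (1 / 2 - p i) / (1 / 2 + p i)

/-- `D(m,n)` for finite `m ≤ n`. -/
def Dfin (p : ℕ → ℝ) (m n : ℕ) : ℝ :=
  if n = m then 0
  else 1 + ∑ j ∈ Finset.Icc 1 (n - m - 1), ∏ i ∈ Finset.Icc 1 j, U p (m + i)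

/-- `D(m,∞) = lim_{n → ∞} D(m,n) ∈ (0,∞]`. -/
def Dinf (p : ℕ → ℝ) (m : ℕ) : ℝ≥0∞ :=
  1 + ∑' j : ℕ, ENNReal.ofReal (∏ i ∈ Finset.Icc 1 (j + 1), U p (m + i))

/-- Event: the walk visits `a` (strictly) before it ever visits `c`. -/
def hitsBefore {Ω : Type*} (X : ℕ → Ω → ℕ) (a c : ℕ) : Set Ω :=
  {ω | ∃ n, X n ω = a ∧ ∀ k < n, X k ω ≠ c}

/-- Event: the walk ever visits `a`. -/
def hits {Ω : Type*} (X : ℕ → Ω → ℕ) (a : ℕ) : Set Ω := {ω | ∃ n, X n ω = a}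

/-- Total local time `ξ(x,∞)` at site `x` (equal to `∞` if there are infinitely many
visits). -/
def localTime {Ω : Type*} (X : ℕ → Ω → ℕ) (x : ℕ) (ω : Ω) : ℝ≥0∞ :=
  ∑' k : ℕ, Set.indicator {k | X k ω = x} (fun _ => (1 : ℝ≥0∞)) k

/-- Total number of upcrossings `ξ(x,∞,↑)` at site `x`. -/
def upcross {Ω : Type*} (X : ℕ → Ω → ℕ) (x : ℕ) (ω : Ω) : ℝ≥0∞ :=
  ∑' k : ℕ, Set.indicator {k | X k ω = x ∧ X (k + 1) ω = x + 1} (fun _ => (1 : ℝ≥0∞)) k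

/-- Iterated logarithm: `iterLog 0 x = x`, `iterLog (k+1) x = log (iterLog k x)`. -/
def iterLog : ℕ → ℝ → ℝ
  | 0, x => x
  | k + 1, x => Real.log (iterLog k x)

/-- `λ(k,x)`: `lam 0 x = 1`, `lam (k+1) x = lam k x * log_k x`. -/
def lam : ℕ → ℝ → ℝ
  | 0, _ => 1
  | k + 1, x => lam k x * iterLog k x

/-- `Λ(K,x,B) = Λ(K-1,x) + B/λ(K,x)` where `Λ(K,x) = ∑_{k=1}^{K} 1/λ(k,x)`. -/
def LamB (K : ℕ) (B : ℝ) (x : ℝ) : ℝ :=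
  (∑ k ∈ Finset.Icc 1 (K - 1), 1 / lam k x) + B / lam K x

/-- The truncation convention: with `i₀ = min{i ≥ 1 : q i < 1/2}` one has `p i = q i₀`
for `1 ≤ i ≤ i₀` and `p i = q i` for `i > i₀`. -/
def IsTruncation (q p : ℕ → ℝ) : Prop :=
  ∃ i0 : ℕ, 1 ≤ i0 ∧ q i0 < 1 / 2 ∧ (∀ i, 1 ≤ i → i < i0 → ¬ q i < 1 / 2) ∧
    (∀ i, 1 ≤ i → i ≤ i0 → p i = q i0) ∧ ∀ i, i0 < i → p i = q i

end NNRW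

/-!
Since `p` is nonincreasing and `x ↦ (1/2 - x)/(1/2 + x)` is decreasing, every factor `U (m + i)`
with `i ≥ 1` is at least `u = U (m + 1)`. Hence `D(m,∞)` dominates the geometric series
`∑ uⁿ = 1/(1 - u)`, and `1 - u = 2 p_{m+1}/(1/2 + p_{m+1}) ≤ 4 p_{m+1} ≤ 4 p_m`,
so `D(m,∞) ≥ 1/(4 p_m) → ∞`.
-/

namespace NNRW

variable {p : ℕ → ℝ}

lemma U_nonneg {i : ℕ} (h0 : 0 ≤ p i) (h1 : p i ≤ 1 / 2) : 0 ≤ U p i :=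
  div_nonneg (by linarith) (by linarith)

lemma U_lt_one {i : ℕ} (h : 0 < p i) : U p i < 1 :=
  (div_lt_one (by linarith)).2 (by linarith)

lemma U_le_U_of_le {i j : ℕ} (h0 : 0 ≤ p j) (h : p j ≤ p i) : U p i ≤ U p j := by
  rw [U, U, div_le_div_iff₀ (by linarith) (by linarith)]
  nlinarith

lemma one_sub_U_le {i : ℕ} (h0 : 0 ≤ p i) : 1 - U p i ≤ 4 * p i := by
  rw [sub_le_comm, U, le_div_iff₀ (by linarith)]
  nlinarith

lemma tsum_geometric_le_Dinf {m : ℕ} {u : ℝ} (hu : 0 ≤ u)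
    (hle : ∀ i, 1 ≤ i → u ≤ U p (m + i)) :
    ∑' n : ℕ, ENNReal.ofReal u ^ n ≤ Dinf p m := by
  rw [tsum_eq_zero_add' ENNReal.summable, pow_zero, Dinf]
  gcongr with j
  rw [← ENNReal.ofReal_pow hu]
  refine ENNReal.ofReal_le_ofReal ?_
  calc u ^ (j + 1) = ∏ _i ∈ Icc 1 (j + 1), u := by simp
    _ ≤ ∏ i ∈ Icc 1 (j + 1), U p (m + i) :=
      prod_le_prod (fun _ _ => hu) (fun i hi => hle i (mem_Icc.mp hi).1)

lemma inv_one_sub_le_Dinf {m : ℕ} {u : ℝ} (hu0 : 0 ≤ u) (hu1 : u < 1)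
    (hle : ∀ i, 1 ≤ i → u ≤ U p (m + i)) :
    ENNReal.ofReal (1 - u)⁻¹ ≤ Dinf p m := by
  have hgeom := tsum_geometric_le_Dinf hu0 hle
  rwa [ENNReal.tsum_geometric, ← ENNReal.ofReal_one, ← ENNReal.ofReal_sub _ hu0,
    ← ENNReal.ofReal_inv_of_pos (by linarith)] at hgeom

lemma inv_four_mul_le_Dinf {m : ℕ} (hpos : 0 < p (m + 1)) (hhalf : p (m + 1) ≤ 1 / 2)
    (h0 : ∀ i, 1 ≤ i → 0 ≤ p (m + i)) (hanti : ∀ i, 1 ≤ i → p (m + i) ≤ p (m + 1)) :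
    ENNReal.ofReal (4 * p (m + 1))⁻¹ ≤ Dinf p m := by
  refine le_trans ?_ (inv_one_sub_le_Dinf (U_nonneg hpos.le hhalf) (U_lt_one hpos)
    fun i hi => U_le_U_of_le (h0 i hi) (hanti i hi))
  refine ENNReal.ofReal_le_ofReal (inv_anti₀ ?_ (one_sub_U_le hpos.le))
  linarith [U_lt_one hpos]

end NNRW

open NNRW

/-- if `(p_i)` is strictly positive, nonincreasing and tends to `0`, then
there is an absolute constant `C > 0` with `D(m,∞) ≥ C/p_m` for all large `m`;
consequently `D(m,∞) → ∞`. -/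
theorem stmt0 (p : ℕ → ℝ)
    (hp : ∀ i, 1 ≤ i → 0 < p i ∧ p i < 1 / 2)
    (hmono : ∀ i j, 1 ≤ i → i ≤ j → p j ≤ p i)
    (hlim : Tendsto p atTop (𝓝 0)) :
    (∃ C : ℝ, 0 < C ∧ ∀ᶠ m : ℕ in atTop, ENNReal.ofReal (C / p m) ≤ Dinf p m) ∧
      Tendsto (fun m : ℕ => Dinf p m) atTop (𝓝 ⊤) := by
  have hkey : ∀ᶠ m : ℕ in atTop, ENNReal.ofReal (4⁻¹ / p m) ≤ Dinf p m := by
    filter_upwards [eventually_ge_atTop 1] with m hm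
    obtain ⟨hpos, hhalf⟩ := hp (m + 1) (by omega)
    have hbound := inv_four_mul_le_Dinf hpos hhalf.le (fun i hi => (hp (m + i) (by omega)).1.le)
      fun i hi => hmono (m + 1) (m + i) (by omega) (by omega)
    refine le_trans (ENNReal.ofReal_le_ofReal ?_) hbound
    rw [div_eq_mul_inv, ← mul_inv]
    exact inv_anti₀ (by linarith) (by linarith [hmono m (m + 1) hm (by omega)])
  have hp_pos : Tendsto p atTop (𝓝[>] 0) := tendsto_nhdsWithin_iff.2
    ⟨hlim, by filter_upwards [eventually_ge_atTop 1] with m hm using (hp m hm).1⟩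
  have hbound_top : Tendsto (fun m => ENNReal.ofReal (4⁻¹ / p m)) atTop (𝓝 ⊤) := by
    simp only [div_eq_mul_inv]
    exact ENNReal.tendsto_ofReal_atTop.comp
      (hp_pos.inv_tendsto_nhdsGT_zero.const_mul_atTop (by norm_num))
  exact ⟨⟨4⁻¹, by norm_num, hkey⟩, tendsto_nhds_top_mono hbound_top hkey⟩
end
end

section
/- Let p_i = Λ(K,i,B)/4 (with the truncation convention) for some integer K ≥ 1 and B > 0 with B ≠ 1. Then for all n ≥ m+2 and m large enough, D(m,n) = (1 + o_m(1)) · λ(K−1,m) · (log_{K−1} m)^B · (1/(B−1)) · ( (log_{K−1} m)^{−(B−1)} − (log_{K−1} n)^{−(B−1)} ), where o_m(1) → 0 as m → ∞ uniformly in n. -/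
open MeasureTheory Filter Finset
open scoped ENNReal NNReal Topology

noncomputable section

open NNRW

/-!
Put `k = K - 1` and `F(x) = ∑_{i=1}^{k} log_i x + B log_{k+1} x`. Then
`exp F = λ(k,x) (log_k x)^B`, `F' = Λ(K,x,B)`, and `(log_k x)^{1-B}/(1-B)` is a primitive of
`exp(-F)`, so the claimed main term is `exp F(m) ∫_m^n exp(-F)`. For `i > m` we have
`U_i = (1 - Λ/2)/(1 + Λ/2) = exp(-Λ(i) + O(Λ(i)^2))`, and since `Λ` is decreasing, `F(i+1) - F(i)`
lies between `Λ(i+1)` and `Λ(i)`. Hence both the `j`-th summand `∏_{i ≤ j} U_{m+i}` of `D(m,n)`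
and `exp F(m) ∫_{m+j}^{m+j+1} exp(-F)` are `exp(F(m) - F(m+j) + O(1/m))`: the errors
`Λ(i)^2 = O(1/i^2)` and `Λ(i) - Λ(i+1)` have tails of size `O(1/m)`. Comparing the two sums term
by term gives a relative error `exp(O(1/m)) - 1`, uniformly in `n`.
-/

open Real

namespace NNRW

lemma prod_Icc_one_eq_prod_range {M : Type*} [CommMonoid M] (f : ℕ → M) (n : ℕ) :
    ∏ i ∈ Icc 1 n, f i = ∏ i ∈ range n, f (i + 1) := by
  rw [← Ico_add_one_right_eq_Icc, prod_Ico_eq_prod_range, Nat.add_sub_cancel]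
  simp only [add_comm]

lemma sum_Icc_one_eq_sum_range {M : Type*} [AddCommMonoid M] (f : ℕ → M) (n : ℕ) :
    ∑ i ∈ Icc 1 n, f i = ∑ i ∈ range n, f (i + 1) := by
  rw [← Ico_add_one_right_eq_Icc, sum_Ico_eq_sum_range, Nat.add_sub_cancel]
  simp only [add_comm]

lemma abs_sub_le_of_abs_log_sub_le {a b δ : ℝ} (ha : 0 < a) (hb : 0 < b)
    (h : |log a - log b| ≤ δ) : |a - b| ≤ (exp δ - 1) * b := by
  have hab : a = b * exp (log a - log b) := by
    rw [exp_sub, exp_log ha, exp_log hb]; field_simp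
  rw [hab, ← mul_sub_one, abs_mul, abs_of_pos hb, mul_comm]
  gcongr
  rw [abs_le] at h ⊢
  constructor
  · linarith [add_one_le_exp (log a - log b), add_one_le_exp δ]
  · linarith [exp_le_exp.2 h.2]

lemma abs_sum_sub_sum_le_of_abs_log_sub_le {ι : Type*} (s : Finset ι) {a b : ι → ℝ} {δ : ℝ}
    (ha : ∀ i ∈ s, 0 < a i) (hb : ∀ i ∈ s, 0 < b i) (h : ∀ i ∈ s, |log (a i) - log (b i)| ≤ δ) :
    |∑ i ∈ s, a i - ∑ i ∈ s, b i| ≤ (exp δ - 1) * ∑ i ∈ s, b i := by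
  rw [← sum_sub_distrib, mul_sum]
  exact (abs_sum_le_sum_abs _ _).trans
    (sum_le_sum fun i hi => abs_sub_le_of_abs_log_sub_le (ha i hi) (hb i hi) (h i hi))

lemma sum_range_one_div_sq_le {x : ℝ} (hx : 0 < x) (j : ℕ) :
    ∑ i ∈ range j, 1 / (x + i + 1) ^ 2 ≤ 1 / x := by
  calc ∑ i ∈ range j, 1 / (x + i + 1) ^ 2
      ≤ ∑ i ∈ range j, (1 / (x + i) - 1 / (x + (i + 1 : ℕ))) := by
        gcongr with i
        have : 0 < x + i := by positivity
        push_cast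
        rw [div_sub_div _ _ this.ne' (by positivity),
          div_le_div_iff₀ (by positivity) (by positivity)]
        nlinarith
    _ = 1 / x - 1 / (x + j) := by rw [sum_range_sub' (fun i : ℕ => 1 / (x + i))]; simp
    _ ≤ 1 / x := by linarith [one_div_pos.2 (by positivity : 0 < x + j)]

lemma abs_log_div_add_le {t : ℝ} (h0 : 0 ≤ t) (h1 : t ≤ 1) :
    |log ((1 / 2 - t / 4) / (1 / 2 + t / 4)) + t| ≤ t ^ 2 := by
  have hq : (1 / 2 - t / 4) / (1 / 2 + t / 4) = (2 - t) / (2 + t) := by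
    field_simp; ring
  have hpos : 0 < (2 - t) / (2 + t) := div_pos (by linarith) (by linarith)
  have e1 : (2 - t) / (2 + t) - 1 + t = t ^ 2 / (2 + t) := by
    field_simp; ring
  have e2 : 1 - ((2 - t) / (2 + t))⁻¹ + t = -(t ^ 2 / (2 - t)) := by
    have : 2 - t ≠ 0 := by linarith
    rw [inv_div]; field_simp; ring
  have h2 : t ^ 2 / (2 + t) ≤ t ^ 2 := div_le_self (sq_nonneg t) (by linarith)
  have h3 : t ^ 2 / (2 - t) ≤ t ^ 2 := div_le_self (sq_nonneg t) (by linarith)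
  rw [hq, abs_le]
  constructor <;> linarith [log_le_sub_one_of_pos hpos, one_sub_inv_le_log_of_pos hpos]

lemma lam_eq_prod (k : ℕ) (x : ℝ) : lam k x = ∏ i ∈ range k, iterLog i x := by
  induction k with
  | zero => rfl
  | succ k ih => rw [prod_range_succ, ← ih]; rfl

lemma lam_pos {k : ℕ} {x : ℝ} (hx : ∀ j < k, 0 < iterLog j x) : 0 < lam k x := by
  rw [lam_eq_prod]
  exact prod_pos fun j hj => hx j (mem_range.1 hj)

lemma tendsto_iterLog_atTop : ∀ j, Tendsto (iterLog j) atTop atTop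
  | 0 => tendsto_id
  | j + 1 => tendsto_log_atTop.comp (tendsto_iterLog_atTop j)

lemma hasDerivAt_iterLog {j : ℕ} {x : ℝ} (hx : ∀ i < j, iterLog i x ≠ 0) :
    HasDerivAt (iterLog j) (1 / lam j x) x := by
  induction j with
  | zero => rw [lam, div_one]; exact hasDerivAt_id' x
  | succ j ih =>
    have h := (ih fun i hi => hx i (by omega)).log (hx j (by omega))
    rwa [div_div] at h

section Large

variable {k : ℕ} {x y : ℝ}

lemma iterLog_le_iterLog (hx : ∀ j ≤ k, 1 ≤ iterLog j x) (hxy : x ≤ y) :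
    ∀ j ≤ k + 1, iterLog j x ≤ iterLog j y
  | 0, _ => hxy
  | j + 1, hj =>
    log_le_log (by linarith [hx j (by omega)]) (iterLog_le_iterLog hx hxy j (by omega))

lemma one_le_iterLog_of_le (hx : ∀ j ≤ k, 1 ≤ iterLog j x) (hxy : x ≤ y) :
    ∀ j ≤ k, 1 ≤ iterLog j y := fun j hj =>
  (hx j hj).trans (iterLog_le_iterLog hx hxy j (by omega))

lemma iterLog_pos_of_le (hx : ∀ j ≤ k, 1 ≤ iterLog j x) (hxy : x ≤ y) :
    ∀ j ≤ k, 0 < iterLog j y := fun j hj =>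
  zero_lt_one.trans_le (one_le_iterLog_of_le hx hxy j hj)

lemma lam_le_lam (hx : ∀ j ≤ k, 1 ≤ iterLog j x) (hxy : x ≤ y) {i : ℕ} (hi : i ≤ k + 1) :
    lam i x ≤ lam i y := by
  rw [lam_eq_prod, lam_eq_prod]
  refine prod_le_prod (fun j hj => ?_) fun j hj => ?_
  · have := hx j (by have := mem_range.1 hj; omega); positivity
  · exact iterLog_le_iterLog hx hxy j (by have := mem_range.1 hj; omega)

lemma self_le_lam (hx : ∀ j ≤ k, 1 ≤ iterLog j x) {i : ℕ} (hi1 : 1 ≤ i) (hi : i ≤ k + 1) :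
    x ≤ lam i x := by
  induction i, hi1 using Nat.le_induction with
  | base => simp [lam, iterLog]
  | succ i hi1 ih =>
    calc x ≤ lam i x := ih (by omega)
      _ ≤ lam i x * iterLog i x :=
        le_mul_of_one_le_right (lam_pos fun j hj => iterLog_pos_of_le hx le_rfl j (by omega)).le
          (hx i (by omega))

end Large

/-- `log (λ(k,x) (log_k x)^B)`, expanded into iterated logarithms so that it can be
differentiated termwise. -/
def logWeight (k : ℕ) (B x : ℝ) : ℝ := ∑ i ∈ range k, iterLog (i + 1) x + B * iterLog (k + 1) x

section LogWeight

variable {k : ℕ} {B x y : ℝ}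

lemma exp_logWeight (hx : ∀ j ≤ k, 0 < iterLog j x) :
    exp (logWeight k B x) = lam k x * iterLog k x ^ B := by
  rw [logWeight, exp_add, exp_sum, lam_eq_prod, rpow_def_of_pos (hx k le_rfl), mul_comm B]
  congr 1
  exact prod_congr rfl fun i hi => exp_log (hx i (by have := mem_range.1 hi; omega))

lemma hasDerivAt_logWeight (hx : ∀ j ≤ k, 0 < iterLog j x) :
    HasDerivAt (logWeight k B) (LamB (k + 1) B x) x := by
  have hsum : HasDerivAt (fun y => ∑ i ∈ range k, iterLog (i + 1) y)
      (∑ i ∈ range k, 1 / lam (i + 1) x) x :=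
    HasDerivAt.fun_sum fun i hi =>
      hasDerivAt_iterLog fun j hj => (hx j (by have := mem_range.1 hi; omega)).ne'
  have hlast := (hasDerivAt_iterLog (j := k + 1) fun j hj => (hx j (by omega)).ne').const_mul B
  rw [LamB, Nat.add_sub_cancel, sum_Icc_one_eq_sum_range, ← mul_one_div]
  exact hsum.add hlast

lemma hasDerivAt_iterLog_rpow (hB1 : B ≠ 1) (hx : ∀ j ≤ k, 0 < iterLog j x) :
    HasDerivAt (fun y => iterLog k y ^ (1 - B) / (1 - B)) (exp (-logWeight k B x)) x := by
  have hk := hx k le_rfl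
  have hlam : 0 < lam k x := lam_pos fun j hj => hx j hj.le
  have h := ((hasDerivAt_iterLog fun i hi => (hx i hi.le).ne').rpow_const (p := 1 - B)
    (Or.inl hk.ne')).div_const (1 - B)
  refine h.congr_deriv ?_
  rw [exp_neg, exp_logWeight hx, sub_sub_cancel_left, rpow_neg hk.le]
  field_simp [sub_ne_zero.2 hB1.symm]

lemma logWeight_le_logWeight (hB : 0 ≤ B) (hx : ∀ j ≤ k, 1 ≤ iterLog j x) (hxy : x ≤ y) :
    logWeight k B x ≤ logWeight k B y :=
  add_le_add (sum_le_sum fun i hi => iterLog_le_iterLog hx hxy _ (by have := mem_range.1 hi; omega))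
    (mul_le_mul_of_nonneg_left (iterLog_le_iterLog hx hxy _ le_rfl) hB)

lemma LamB_nonneg (hB : 0 ≤ B) (hx : ∀ j ≤ k, 1 ≤ iterLog j x) : 0 ≤ LamB (k + 1) B x := by
  have hlam : ∀ i ≤ k + 1, 0 < lam i x := fun i hi =>
    lam_pos fun j hj => iterLog_pos_of_le hx le_rfl j (by omega)
  exact add_nonneg
    (sum_nonneg fun i hi => (one_div_pos.2 (hlam i (by have := mem_Icc.1 hi; omega))).le)
    (div_nonneg hB (hlam _ le_rfl).le)

lemma LamB_le_div (hB : 0 ≤ B) (hx : ∀ j ≤ k, 1 ≤ iterLog j x) :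
    LamB (k + 1) B x ≤ (k + B) / x := by
  have hx0 : 0 < x := iterLog_pos_of_le hx le_rfl 0 k.zero_le
  calc LamB (k + 1) B x ≤ ∑ _i ∈ Icc 1 k, 1 / x + B / x := by
        rw [LamB, Nat.add_sub_cancel]
        gcongr with i hi
        · exact self_le_lam hx (mem_Icc.1 hi).1 (by have := mem_Icc.1 hi; omega)
        · exact self_le_lam hx le_add_self le_rfl
    _ = (k + B) / x := by rw [sum_const, Nat.card_Icc, Nat.add_sub_cancel, nsmul_eq_mul]; ring

lemma LamB_le_LamB (hB : 0 ≤ B) (hx : ∀ j ≤ k, 1 ≤ iterLog j x) (hxy : x ≤ y) :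
    LamB (k + 1) B y ≤ LamB (k + 1) B x := by
  have hlam : ∀ i ≤ k + 1, 0 < lam i x := fun i hi =>
    lam_pos fun j hj => iterLog_pos_of_le hx le_rfl j (by omega)
  rw [LamB, LamB, Nat.add_sub_cancel]
  gcongr with i hi
  · exact hlam i (by have := mem_Icc.1 hi; omega)
  · exact lam_le_lam hx hxy (by have := mem_Icc.1 hi; omega)
  · exact hlam _ le_rfl
  · exact lam_le_lam hx hxy le_rfl

lemma continuousOn_exp_neg_logWeight (hx : ∀ j ≤ k, 1 ≤ iterLog j x) :
    ContinuousOn (fun t => exp (-logWeight k B t)) (Set.Ici x) := fun _t ht =>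
  (hasDerivAt_logWeight (iterLog_pos_of_le hx ht)).continuousAt.neg.rexp.continuousWithinAt

lemma intervalIntegrable_exp_neg_logWeight (hx : ∀ j ≤ k, 1 ≤ iterLog j x) {a b : ℝ}
    (ha : x ≤ a) (hb : x ≤ b) :
    IntervalIntegrable (fun t => exp (-logWeight k B t)) MeasureTheory.volume a b :=
  ((continuousOn_exp_neg_logWeight hx).mono fun _t ht =>
    (le_inf ha hb).trans ht.1).intervalIntegrable

lemma integral_exp_neg_logWeight (hB1 : B ≠ 1) (hx : ∀ j ≤ k, 1 ≤ iterLog j x) (hxy : x ≤ y) :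
    ∫ t in x..y, exp (-logWeight k B t) =
      iterLog k y ^ (1 - B) / (1 - B) - iterLog k x ^ (1 - B) / (1 - B) := by
  refine intervalIntegral.integral_eq_sub_of_hasDerivAt
    (f := fun t => iterLog k t ^ (1 - B) / (1 - B)) (fun t ht => ?_)
    (intervalIntegrable_exp_neg_logWeight hx le_rfl hxy)
  rw [Set.uIcc_of_le hxy] at ht
  exact hasDerivAt_iterLog_rpow hB1 (iterLog_pos_of_le hx ht.1)

lemma exp_logWeight_mul_integral (hB1 : B ≠ 1) (hx : ∀ j ≤ k, 1 ≤ iterLog j x) (hxy : x ≤ y) :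
    exp (logWeight k B x) * ∫ t in x..y, exp (-logWeight k B t) =
      lam k x * iterLog k x ^ B / (B - 1) * (iterLog k x ^ (1 - B) - iterLog k y ^ (1 - B)) := by
  have hpos := iterLog_pos_of_le hx le_rfl
  have hB1' : B - 1 ≠ 0 := sub_ne_zero.2 hB1
  have hB1'' : 1 - B ≠ 0 := sub_ne_zero.2 hB1.symm
  rw [integral_exp_neg_logWeight hB1 hx hxy, exp_logWeight hpos]
  field_simp
  ring

lemma logWeight_add_one_sub_mem_Icc (hB : 0 ≤ B) (hx : ∀ j ≤ k, 1 ≤ iterLog j x) :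
    logWeight k B (x + 1) - logWeight k B x ∈
      Set.Icc (LamB (k + 1) B (x + 1)) (LamB (k + 1) B x) := by
  obtain ⟨c, hc, hslope⟩ := exists_hasDerivAt_eq_slope (logWeight k B) (LamB (k + 1) B)
    (lt_add_one x)
    (HasDerivAt.continuousOn fun t ht => hasDerivAt_logWeight (iterLog_pos_of_le hx ht.1))
    (fun t ht => hasDerivAt_logWeight (iterLog_pos_of_le hx ht.1.le))
  rw [add_sub_cancel_left, div_one] at hslope
  rw [← hslope]
  exact ⟨LamB_le_LamB hB (one_le_iterLog_of_le hx hc.1.le) hc.2.le, LamB_le_LamB hB hx hc.1.le⟩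

lemma integral_exp_neg_logWeight_mem_Icc (hB : 0 ≤ B) (hx : ∀ j ≤ k, 1 ≤ iterLog j x) :
    ∫ t in x..x + 1, exp (-logWeight k B t) ∈
      Set.Icc (exp (-logWeight k B (x + 1))) (exp (-logWeight k B x)) := by
  have hint := intervalIntegrable_exp_neg_logWeight (B := B) hx le_rfl
    (le_add_of_nonneg_right zero_le_one)
  have hmono : ∀ t ∈ Set.Icc x (x + 1), exp (-logWeight k B (x + 1)) ≤ exp (-logWeight k B t) ∧
      exp (-logWeight k B t) ≤ exp (-logWeight k B x) := fun t ht =>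
    ⟨exp_le_exp.2 (neg_le_neg (logWeight_le_logWeight hB (one_le_iterLog_of_le hx ht.1) ht.2)),
      exp_le_exp.2 (neg_le_neg (logWeight_le_logWeight hB hx ht.1))⟩
  constructor
  · simpa using intervalIntegral.integral_mono_on (by linarith) intervalIntegrable_const hint
      fun t ht => (hmono t ht).1
  · simpa using intervalIntegral.integral_mono_on (by linarith) hint intervalIntegrable_const
      fun t ht => (hmono t ht).2

lemma LamB_le_one (hB : 0 ≤ B) (hx : ∀ j ≤ k, 1 ≤ iterLog j x) (hxB : k + B ≤ x) :
    LamB (k + 1) B x ≤ 1 :=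
  (LamB_le_div hB hx).trans <| (div_le_one (iterLog_pos_of_le hx le_rfl 0 k.zero_le)).2 hxB

lemma abs_log_add_logWeight_sub_le (hB : 0 ≤ B) (hx : ∀ j ≤ k, 1 ≤ iterLog j x)
    (hxB : k + B ≤ x) :
    |log ((1 / 2 - LamB (k + 1) B (x + 1) / 4) / (1 / 2 + LamB (k + 1) B (x + 1) / 4)) +
        (logWeight k B (x + 1) - logWeight k B x)| ≤
      LamB (k + 1) B (x + 1) ^ 2 + (LamB (k + 1) B x - LamB (k + 1) B (x + 1)) := by
  have hx1 : x ≤ x + 1 := le_add_of_nonneg_right zero_le_one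
  have hΛ := abs_log_div_add_le (LamB_nonneg hB (one_le_iterLog_of_le hx hx1))
    (LamB_le_one hB (one_le_iterLog_of_le hx hx1) (hxB.trans hx1))
  have hF := logWeight_add_one_sub_mem_Icc hB hx
  rw [abs_le] at hΛ ⊢
  constructor <;> linarith [hF.1, hF.2]

lemma sum_range_LamB_sq_le (hB : 0 ≤ B) (hx : ∀ j ≤ k, 1 ≤ iterLog j x) (j : ℕ) :
    ∑ i ∈ range j, LamB (k + 1) B (x + i + 1) ^ 2 ≤ (k + B) ^ 2 / x := by
  have hx0 : 0 < x := iterLog_pos_of_le hx le_rfl 0 k.zero_le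
  calc ∑ i ∈ range j, LamB (k + 1) B (x + i + 1) ^ 2
      ≤ ∑ i ∈ range j, (k + B) ^ 2 * (1 / (x + i + 1) ^ 2) := by
        refine sum_le_sum fun i _ => ?_
        have hxi := one_le_iterLog_of_le hx (by linarith [(Nat.cast_nonneg i : (0 : ℝ) ≤ i)] :
          x ≤ x + i + 1)
        rw [mul_one_div, ← div_pow]
        exact pow_le_pow_left₀ (LamB_nonneg hB hxi) (LamB_le_div hB hxi) 2
    _ ≤ (k + B) ^ 2 / x := by
        rw [← mul_sum, ← mul_one_div]
        exact mul_le_mul_of_nonneg_left (sum_range_one_div_sq_le hx0 j) (sq_nonneg _)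

end LogWeight

lemma Dfin_eq_sum_range {p : ℕ → ℝ} {m n : ℕ} (hmn : m < n) :
    Dfin p m n = ∑ j ∈ range (n - m), ∏ i ∈ range j, U p (m + i + 1) := by
  obtain ⟨N, hN⟩ : ∃ N, n - m = N + 1 := ⟨n - m - 1, by omega⟩
  rw [Dfin, if_neg hmn.ne', hN, sum_range_succ', Nat.add_sub_cancel, sum_Icc_one_eq_sum_range,
    add_comm]
  simp [prod_Icc_one_eq_prod_range, add_assoc]

section Comparison

variable {k m : ℕ} {B : ℝ} {p : ℕ → ℝ}

lemma abs_log_prod_U_sub_le (hB : 0 ≤ B) (hm : ∀ j ≤ k, 1 ≤ iterLog j m) (hmB : k + B ≤ m)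
    (hp : ∀ i, m < i → p i = LamB (k + 1) B i / 4) (j : ℕ) :
    0 < ∏ i ∈ range j, U p (m + i + 1) ∧
      |log (∏ i ∈ range j, U p (m + i + 1)) - (logWeight k B m - logWeight k B (m + j))| ≤
        ((k + B) ^ 2 + (k + B)) / m := by
  set Λ : ℕ → ℝ := fun i => LamB (k + 1) B (m + i)
  set F : ℕ → ℝ := fun i => logWeight k B (m + i)
  have hmi : ∀ i : ℕ, (m : ℝ) ≤ m + i := fun i => le_add_of_nonneg_right i.cast_nonneg
  have hlarge : ∀ i : ℕ, ∀ j ≤ k, 1 ≤ iterLog j (m + i) := fun i => one_le_iterLog_of_le hm (hmi i)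
  have hcast : ∀ i : ℕ, (m : ℝ) + (i + 1 : ℕ) = m + i + 1 := fun i => by push_cast; ring
  have hU : ∀ i : ℕ, U p (m + i + 1) =
      (1 / 2 - LamB (k + 1) B (m + i + 1) / 4) / (1 / 2 + LamB (k + 1) B (m + i + 1) / 4) :=
    fun i => by rw [U, hp _ (by omega)]; push_cast; rfl
  have hUpos : ∀ i, 0 < U p (m + i + 1) := fun i => by
    have hx := hcast i ▸ hlarge (i + 1)
    have := LamB_le_one hB hx (hmB.trans (hcast i ▸ hmi _))
    rw [hU]; exact div_pos (by linarith) (by linarith [LamB_nonneg hB hx])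
  have hstep : ∀ i, |log (U p (m + i + 1)) + (F (i + 1) - F i)| ≤
      Λ (i + 1) ^ 2 + (Λ i - Λ (i + 1)) := fun i => by
    simpa only [hU, Λ, F, hcast] using
      abs_log_add_logWeight_sub_le hB (hlarge i) (hmB.trans (hmi i))
  have hsq : ∑ i ∈ range j, Λ (i + 1) ^ 2 ≤ (k + B) ^ 2 / m := by
    simpa only [Λ, hcast] using sum_range_LamB_sq_le hB hm j
  have hΛ0 : Λ 0 ≤ (k + B) / m := by simpa [Λ] using LamB_le_div hB hm
  refine ⟨prod_pos fun i _ => hUpos i, ?_⟩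
  rw [log_prod fun i _ => (hUpos i).ne']
  calc |∑ i ∈ range j, log (U p (m + i + 1)) - (logWeight k B m - F j)|
      = |∑ i ∈ range j, (log (U p (m + i + 1)) + (F (i + 1) - F i))| := by
        rw [sum_add_distrib, sum_range_sub]
        simp only [F, Nat.cast_zero, add_zero]
        ring_nf
    _ ≤ ∑ i ∈ range j, (Λ (i + 1) ^ 2 + (Λ i - Λ (i + 1))) :=
        (abs_sum_le_sum_abs _ _).trans (sum_le_sum fun i _ => hstep i)
    _ ≤ ((k + B) ^ 2 + (k + B)) / m := by
        rw [sum_add_distrib, sum_range_sub', add_div]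
        linarith [LamB_nonneg hB (hlarge j)]

lemma abs_log_integral_sub_le (hB : 0 ≤ B) {x : ℝ} (hx : ∀ j ≤ k, 1 ≤ iterLog j x) (a : ℝ) :
    0 < exp a * ∫ t in x..x + 1, exp (-logWeight k B t) ∧
      |log (exp a * ∫ t in x..x + 1, exp (-logWeight k B t)) - (a - logWeight k B x)| ≤
        LamB (k + 1) B x := by
  obtain ⟨hlow, hupp⟩ := integral_exp_neg_logWeight_mem_Icc hB hx
  have hI := (exp_pos _).trans_le hlow
  have hF := logWeight_add_one_sub_mem_Icc hB hx
  have h1 := log_le_log (exp_pos _) hlow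
  have h2 := log_le_log hI hupp
  rw [log_exp] at h1 h2
  refine ⟨mul_pos (exp_pos a) hI, ?_⟩
  rw [log_mul (exp_pos a).ne' hI.ne', log_exp, abs_le]
  constructor <;> linarith [hF.2]

theorem abs_Dfin_sub_le (hB : 0 ≤ B) (hm : ∀ j ≤ k, 1 ≤ iterLog j m) (hmB : k + B ≤ m)
    (hp : ∀ i, m < i → p i = LamB (k + 1) B i / 4) {n : ℕ} (hmn : m < n) :
    |Dfin p m n - exp (logWeight k B m) * ∫ x in (m : ℝ)..n, exp (-logWeight k B x)| ≤
      (exp (((k + B) ^ 2 + 2 * (k + B)) / m) - 1) *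
        (exp (logWeight k B m) * ∫ x in (m : ℝ)..n, exp (-logWeight k B x)) := by
  have hmi : ∀ i : ℕ, (m : ℝ) ≤ m + i := fun i => le_add_of_nonneg_right i.cast_nonneg
  have hlarge : ∀ i : ℕ, ∀ j ≤ k, 1 ≤ iterLog j (m + i) := fun i => one_le_iterLog_of_le hm (hmi i)
  have hsplit : ∑ j ∈ range (n - m), ∫ x in (m + j : ℝ)..m + j + 1, exp (-logWeight k B x) =
      ∫ x in (m : ℝ)..n, exp (-logWeight k B x) := by
    have := intervalIntegral.sum_integral_adjacent_intervals (a := fun j : ℕ => (m + j : ℝ))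
      (μ := MeasureTheory.volume) (n := n - m)
      fun j _ => intervalIntegrable_exp_neg_logWeight (B := B) hm (hmi j) (hmi (j + 1))
    simpa [Nat.cast_sub hmn.le, ← add_assoc] using this
  rw [Dfin_eq_sum_range hmn, ← hsplit, mul_sum]
  refine abs_sum_sub_sum_le_of_abs_log_sub_le _
    (fun j _ => (abs_log_prod_U_sub_le hB hm hmB hp j).1)
    (fun j _ => (abs_log_integral_sub_le hB (hlarge j) _).1) fun j _ => ?_
  have hprod := (abs_log_prod_U_sub_le hB hm hmB hp j).2
  have hint := (abs_log_integral_sub_le hB (hlarge j) (logWeight k B m)).2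
  have hΛ : LamB (k + 1) B (m + j) ≤ (k + B) / m :=
    (LamB_le_LamB hB hm (hmi j)).trans (LamB_le_div hB hm)
  rw [abs_sub_comm] at hint
  calc _ ≤ ((k + B) ^ 2 + (k + B)) / m + (k + B) / m :=
        (abs_sub_le _ (logWeight k B m - logWeight k B (m + j)) _).trans (by linarith)
    _ = ((k + B) ^ 2 + 2 * (k + B)) / m := by ring

end Comparison

end NNRW

theorem stmt3_general (K : ℕ) (hK : 1 ≤ K) (B : ℝ) (hB : 0 < B) (hB1 : B ≠ 1) (p : ℕ → ℝ)
    (htr : IsTruncation (fun i : ℕ => LamB K B i / 4) p) :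
    ∀ ε : ℝ, 0 < ε → ∃ M : ℕ, ∀ m : ℕ, M ≤ m → ∀ n : ℕ, m + 2 ≤ n →
      |Dfin p m n -
          lam (K - 1) m * iterLog (K - 1) m ^ B / (B - 1) *
            (iterLog (K - 1) m ^ (1 - B) - iterLog (K - 1) n ^ (1 - B))| ≤
        ε * |lam (K - 1) m * iterLog (K - 1) m ^ B / (B - 1) *
            (iterLog (K - 1) m ^ (1 - B) - iterLog (K - 1) n ^ (1 - B))| := by
  obtain ⟨k, rfl⟩ : ∃ k, K = k + 1 := ⟨K - 1, by omega⟩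
  obtain ⟨i₀, -, -, -, -, hp⟩ := htr
  intro ε hε
  set δ : ℕ → ℝ := fun m => exp (((k + B) ^ 2 + 2 * (k + B)) / m) - 1
  have hδ : Tendsto δ atTop (𝓝 0) := by
    simpa using ((tendsto_const_div_atTop_nhds_zero_nat _).rexp).sub_const 1
  have hlarge : ∀ᶠ m : ℕ in atTop,
      (∀ j ≤ k, 1 ≤ iterLog j m) ∧ k + B ≤ m ∧ i₀ ≤ m ∧ δ m ≤ ε :=
    ((eventually_all_finite (Set.finite_Iic k)).2 fun j _ =>
      ((tendsto_iterLog_atTop j).comp tendsto_natCast_atTop_atTop).eventually_ge_atTop 1).and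
    ((tendsto_natCast_atTop_atTop.eventually_ge_atTop _).and
      ((eventually_ge_atTop i₀).and (hδ.eventually (Iic_mem_nhds hε))))
  obtain ⟨M, hM⟩ := eventually_atTop.1 hlarge
  refine ⟨M, fun m hmM n hn => ?_⟩
  obtain ⟨hm, hmB, hi₀, hδε⟩ := hM m hmM
  have hmn : (m : ℝ) ≤ n := by exact_mod_cast (by omega : m ≤ n)
  have hT : 0 ≤ exp (logWeight k B m) * ∫ x in (m : ℝ)..n, exp (-logWeight k B x) :=
    mul_nonneg (exp_pos _).le (intervalIntegral.integral_nonneg hmn fun _ _ => (exp_pos _).le)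
  rw [Nat.add_sub_cancel, ← exp_logWeight_mul_integral hB1 hm hmn]
  calc _ ≤ δ m * _ := abs_Dfin_sub_le hB.le hm hmB (fun i hi => hp i (by omega)) (by omega)
    _ ≤ ε * |_| := mul_le_mul hδε (le_abs_self _) hT hε.le

/-- for `p_i = Λ(K,i,B)/4` (truncation convention) with `B ≠ 1`, uniformly in
`n ≥ m+2`, `D(m,n) = (1+o_m(1)) λ(K-1,m) (log_{K-1} m)^B (1/(B-1))
((log_{K-1} m)^{1-B} - (log_{K-1} n)^{1-B})`. -/
theorem stmt3 (K : ℕ) (hK : 1 ≤ K) (B : ℝ) (hB : 0 < B) (hB1 : B ≠ 1) (p : ℕ → ℝ)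
    (hp : ∀ i, 1 ≤ i → 0 ≤ p i ∧ p i < 1 / 2)
    (htr : IsTruncation (fun i : ℕ => LamB K B i / 4) p) :
    ∀ ε : ℝ, 0 < ε → ∃ M : ℕ, ∀ m : ℕ, M ≤ m → ∀ n : ℕ, m + 2 ≤ n →
      |Dfin p m n -
          lam (K - 1) m * iterLog (K - 1) m ^ B / (B - 1) *
            (iterLog (K - 1) m ^ (1 - B) - iterLog (K - 1) n ^ (1 - B))| ≤
        ε * |lam (K - 1) m * iterLog (K - 1) m ^ B / (B - 1) *
            (iterLog (K - 1) m ^ (1 - B) - iterLog (K - 1) n ^ (1 - B))| :=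
  stmt3_general K hK B hB hB1 p htr
end
end

section
/- Assume the chain is transient, i.e. D(0,∞) < ∞, and that p_R → 0 as R → ∞. Then for every ε > 0, with probability 1, ξ(R,∞) ≤ 2(1+ε) D(R,∞) log R for all sufficiently large R. -/
open MeasureTheory Filter Finset
open scoped ENNReal NNReal Topology

noncomputable section

/-! Starting from `0 ≠ R`, the number of visits to `R` is dominated by a geometric variable:
the walk must first reach `R` and then return to `R` again and again, and each return has
probability at most `ρ_R = 1 - E_R / D(R,∞)`. Analytically this is the statement that
`h(x) ρ^m` bounds the probability of `m + 1` further visits from `x`, where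
`h(x) = 1 - D(R,x)/D(R,∞)` (for `x > R`) is superharmonic for the walk; the bound is propagated
through the finite-dimensional distributions by induction on the time horizon. Since
`E_R ≥ 1/2`, `ρ_R ^ (2(1+ε) D(R,∞) log R) ≤ e R^{-(1+ε)}`, which is summable in `R`, and
Borel–Cantelli concludes. -/

namespace NNRW

variable {p : ℕ → ℝ}

section Transitions

variable (hp : ∀ i, 1 ≤ i → 0 ≤ p i ∧ p i < 1 / 2)
include hp

lemma E_nonneg (x : ℕ) : 0 ≤ E p x := by
  unfold E; split_ifs with hx
  · exact zero_le_one
  · linarith [(hp x (Nat.one_le_iff_ne_zero.mpr hx)).1]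

lemma E_le_one (x : ℕ) : E p x ≤ 1 := by
  unfold E; split_ifs with hx
  · exact le_rfl
  · linarith [(hp x (Nat.one_le_iff_ne_zero.mpr hx)).2]

lemma one_half_le_E {x : ℕ} (hx : 1 ≤ x) : 1 / 2 ≤ E p x := by
  rw [E, if_neg (Nat.one_le_iff_ne_zero.mp hx)]
  linarith [(hp x hx).1]

lemma U_pos {i : ℕ} (hi : 1 ≤ i) : 0 < U p i :=
  div_pos (by linarith [(hp i hi).2]) (by linarith [(hp i hi).1])

lemma E_mul_U {x : ℕ} (hx : 1 ≤ x) : E p x * U p x = 1 - E p x := by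
  have : 1 / 2 + p x ≠ 0 := by linarith [(hp x hx).1]
  rw [E, if_neg (Nat.one_le_iff_ne_zero.mp hx), U, mul_div_cancel₀ _ this]
  ring

lemma step_nonneg (i j : ℕ) : 0 ≤ step p i j := by
  unfold step; split_ifs
  · exact E_nonneg hp i
  · linarith [E_le_one hp i]
  · exact le_rfl

end Transitions

lemma step_self_succ (i : ℕ) : step p i (i + 1) = E p i := if_pos rfl

lemma step_self_pred (i : ℕ) : step p i (i - 1) = 1 - E p i := by
  rcases Nat.eq_zero_or_pos i with rfl | hi
  · simp [step, E]
  · rw [step, if_neg (by omega), if_pos (by omega)]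

lemma step_eq_zero {i j : ℕ} (h₁ : j ≠ i + 1) (h₂ : j + 1 ≠ i) : step p i j = 0 := by
  rw [step, if_neg h₁, if_neg h₂]

lemma tsum_ofReal_step_mul (hp : ∀ i, 1 ≤ i → 0 ≤ p i ∧ p i < 1 / 2) (x : ℕ) {f : ℕ → ℝ}
    (hf : ∀ y, 0 ≤ f y) :
    ∑' y, ENNReal.ofReal (step p x y * f y) =
      ENNReal.ofReal (E p x * f (x + 1) + (1 - E p x) * f (x - 1)) := by
  have hE := E_le_one hp x
  rw [tsum_eq_sum (s := {x + 1, x - 1}), sum_pair (by omega), step_self_succ, step_self_pred,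
    ENNReal.ofReal_add (mul_nonneg (E_nonneg hp x) (hf _)) (mul_nonneg (by linarith) (hf _))]
  intro y hy
  simp only [mem_insert, mem_singleton, not_or] at hy
  rw [step_eq_zero hy.1 (by omega), zero_mul, ENNReal.ofReal_zero]

def Uprod (p : ℕ → ℝ) (m j : ℕ) : ℝ := ∏ i ∈ Icc 1 j, U p (m + i)

@[simp] lemma Uprod_zero (m : ℕ) : Uprod p m 0 = 1 := by simp [Uprod]

lemma Uprod_succ (m j : ℕ) : Uprod p m (j + 1) = Uprod p m j * U p (m + (j + 1)) :=
  prod_Icc_succ_top (by omega) _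

lemma Uprod_add (a b k : ℕ) : Uprod p a (b + k) = Uprod p a b * Uprod p (a + b) k := by
  induction k with
  | zero => simp
  | succ k ih =>
    rw [← add_assoc, Uprod_succ, ih, Uprod_succ, mul_assoc, add_assoc a b, add_assoc b]

lemma Uprod_pos (hp : ∀ i, 1 ≤ i → 0 ≤ p i ∧ p i < 1 / 2) (m j : ℕ) : 0 < Uprod p m j :=
  prod_pos fun i hi => U_pos hp (by have := (mem_Icc.mp hi).1; omega)

lemma Dinf_eq_tsum (m : ℕ) : Dinf p m = ∑' j, ENNReal.ofReal (Uprod p m j) := by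
  rw [tsum_eq_zero_add' ENNReal.summable, Uprod_zero, ENNReal.ofReal_one]
  rfl

lemma Dinf_ne_top (hp : ∀ i, 1 ≤ i → 0 ≤ p i ∧ p i < 1 / 2) (htrans : Dinf p 0 < ⊤) (m : ℕ) :
    Dinf p m ≠ ⊤ := by
  have hshift : ENNReal.ofReal (Uprod p 0 m) * Dinf p m ≤ Dinf p 0 := by
    calc ENNReal.ofReal (Uprod p 0 m) * Dinf p m
        = ∑' j, ENNReal.ofReal (Uprod p 0 (m + j)) := by
          simp_rw [Dinf_eq_tsum, ← ENNReal.tsum_mul_left, Uprod_add, zero_add,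
            ENNReal.ofReal_mul (Uprod_pos hp 0 m).le]
      _ ≤ Dinf p 0 := by
          rw [Dinf_eq_tsum]
          exact ENNReal.tsum_comp_le_tsum_of_injective (add_right_injective m) _
  intro htop
  rw [htop, ENNReal.mul_top (ENNReal.ofReal_pos.mpr (Uprod_pos hp 0 m)).ne'] at hshift
  exact htrans.ne (top_le_iff.mp hshift)

lemma one_le_toReal_Dinf (hp : ∀ i, 1 ≤ i → 0 ≤ p i ∧ p i < 1 / 2) (htrans : Dinf p 0 < ⊤)
    (m : ℕ) : 1 ≤ (Dinf p m).toReal :=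
  ENNReal.toReal_mono (Dinf_ne_top hp htrans m) le_self_add

lemma Dfin_eq_sum {m n : ℕ} (h : m ≤ n) : Dfin p m n = ∑ j ∈ range (n - m), Uprod p m j := by
  rcases h.eq_or_lt with rfl | h
  · simp [Dfin]
  · obtain ⟨k, hk⟩ : ∃ k, n - m = k + 1 := ⟨n - m - 1, by omega⟩
    rw [Dfin, if_neg h.ne', hk, range_eq_Ico, sum_eq_sum_Ico_succ_bot (by omega), Uprod_zero,
      Ico_add_one_right_eq_Icc, Nat.add_sub_cancel]
    rfl

lemma Dfin_succ {m n : ℕ} (h : m ≤ n) : Dfin p m (n + 1) = Dfin p m n + Uprod p m (n - m) := by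
  rw [Dfin_eq_sum h, Dfin_eq_sum (h.trans n.le_succ), show n + 1 - m = n - m + 1 by omega,
    sum_range_succ]

lemma Dfin_le_toReal_Dinf (hp : ∀ i, 1 ≤ i → 0 ≤ p i ∧ p i < 1 / 2) (htrans : Dinf p 0 < ⊤)
    {m n : ℕ} (h : m ≤ n) : Dfin p m n ≤ (Dinf p m).toReal := by
  rw [← ENNReal.ofReal_le_iff_le_toReal (Dinf_ne_top hp htrans m), Dfin_eq_sum h,
    ENNReal.ofReal_sum_of_nonneg fun j _ => (Uprod_pos hp m j).le, Dinf_eq_tsum]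
  exact ENNReal.sum_le_tsum _

lemma Dfin_harmonic (hp : ∀ i, 1 ≤ i → 0 ≤ p i ∧ p i < 1 / 2) {R x : ℕ} (hx : R < x) :
    E p x * Dfin p R (x + 1) + (1 - E p x) * Dfin p R (x - 1) = Dfin p R x := by
  obtain ⟨y, rfl⟩ : ∃ y, x = y + 1 := ⟨x - 1, by omega⟩
  have hsucc := Dfin_succ (p := p) (show R ≤ y + 1 by omega)
  have hy := Dfin_succ (p := p) (show R ≤ y by omega)
  have hU : Uprod p R (y + 1 - R) = Uprod p R (y - R) * U p (y + 1) := by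
    rw [show y + 1 - R = y - R + 1 by omega, Uprod_succ, show R + (y - R + 1) = y + 1 by omega]
  have hEU := E_mul_U hp (show 1 ≤ y + 1 by omega)
  rw [Nat.add_sub_cancel]
  linear_combination E p (y + 1) * hsucc - (1 - E p (y + 1)) * hy +
    E p (y + 1) * hU + Uprod p R (y - R) * hEU

variable {R : ℕ}

/-- For `x > R` this is the probability of ever hitting `R` from `x`. -/
def hitProb (p : ℕ → ℝ) (R x : ℕ) : ℝ :=
  if x ≤ R then 1 else 1 - Dfin p R x / (Dinf p R).toReal

def returnProb (p : ℕ → ℝ) (R : ℕ) : ℝ := 1 - E p R / (Dinf p R).toReal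

/-- The probability that the walk started at `x` visits `R` at least `m` times among the times
`1, …, n`. -/
def visitProb (p : ℕ → ℝ) (R : ℕ) : ℕ → ℕ → ℕ → ℝ
  | _, 0, _ => 1
  | 0, _ + 1, _ => 0
  | n + 1, m + 1, x =>
      E p x * visitProb p R n (if x + 1 = R then m else m + 1) (x + 1) +
        (1 - E p x) * visitProb p R n (if x - 1 = R then m else m + 1) (x - 1)

lemma visitProb_zero (n x : ℕ) : visitProb p R n 0 x = 1 := by cases n <;> rfl

lemma hitProb_of_le {x : ℕ} (hx : x ≤ R) : hitProb p R x = 1 := if_pos hx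

lemma hitProb_of_ge {x : ℕ} (hx : R ≤ x) :
    hitProb p R x = 1 - Dfin p R x / (Dinf p R).toReal := by
  rcases hx.eq_or_lt with rfl | hx
  · simp [hitProb, Dfin]
  · exact if_neg hx.not_ge

section Superharmonic

variable (hp : ∀ i, 1 ≤ i → 0 ≤ p i ∧ p i < 1 / 2) (htrans : Dinf p 0 < ⊤)
include hp htrans

lemma hitProb_nonneg (x : ℕ) : 0 ≤ hitProb p R x := by
  rcases le_total x R with hx | hx
  · rw [hitProb_of_le hx]; exact zero_le_one
  · rw [hitProb_of_ge hx, sub_nonneg]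
    exact div_le_one_of_le₀ (Dfin_le_toReal_Dinf hp htrans hx) ENNReal.toReal_nonneg

lemma returnProb_nonneg : 0 ≤ returnProb p R := by
  rw [returnProb, sub_nonneg]
  exact div_le_one_of_le₀ ((E_le_one hp R).trans (one_le_toReal_Dinf hp htrans R))
    ENNReal.toReal_nonneg

lemma mean_hitProb_self :
    E p R * hitProb p R (R + 1) + (1 - E p R) * hitProb p R (R - 1) = returnProb p R := by
  have hD : (Dinf p R).toReal ≠ 0 := (one_le_toReal_Dinf hp htrans R).trans_lt' one_pos |>.ne'
  rw [hitProb_of_ge R.le_succ, Dfin_succ le_rfl, hitProb_of_le (R.sub_le 1), returnProb]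
  simp only [Dfin, if_pos, Nat.sub_self, Uprod_zero, zero_add]
  field_simp
  ring

lemma hitProb_superharmonic (x : ℕ) :
    E p x * hitProb p R (x + 1) + (1 - E p x) * hitProb p R (x - 1) ≤ hitProb p R x := by
  rcases lt_trichotomy x R with hx | rfl | hx
  · simp only [hitProb_of_le (show x + 1 ≤ R by omega), hitProb_of_le (show x - 1 ≤ R by omega),
      hitProb_of_le hx.le]
    linarith
  · rw [mean_hitProb_self hp htrans, hitProb_of_le le_rfl, returnProb, sub_le_self_iff]
    exact div_nonneg (E_nonneg hp x) ENNReal.toReal_nonneg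
  · rw [hitProb_of_ge (show R ≤ x + 1 by omega), hitProb_of_ge (show R ≤ x - 1 by omega),
      hitProb_of_ge hx.le, ← Dfin_harmonic hp hx]
    apply le_of_eq
    ring

end Superharmonic

lemma visitProb_nonneg (hp : ∀ i, 1 ≤ i → 0 ≤ p i ∧ p i < 1 / 2) :
    ∀ n m x, 0 ≤ visitProb p R n m x
  | n, 0, x => by rw [visitProb_zero]; exact zero_le_one
  | 0, _ + 1, _ => le_rfl
  | n + 1, m + 1, x => by
    have := E_le_one hp x
    rw [visitProb]
    exact add_nonneg (mul_nonneg (E_nonneg hp x) (visitProb_nonneg hp n _ _))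
      (mul_nonneg (by linarith) (visitProb_nonneg hp n _ _))

/-- With the arrival at `y` counted as a visit, `h(y) ρ^m` bounds the probability of `m + 1`
visits from `y ≠ R` and of `m` further visits from `R`. -/
lemma visitProb_le (hp : ∀ i, 1 ≤ i → 0 ≤ p i ∧ p i < 1 / 2) (htrans : Dinf p 0 < ⊤) :
    ∀ n m y, visitProb p R n (if y = R then m else m + 1) y ≤
      hitProb p R y * returnProb p R ^ m
  | 0, m, y => by
    have : 0 ≤ hitProb p R y * returnProb p R ^ m :=
      mul_nonneg (hitProb_nonneg hp htrans y) (pow_nonneg (returnProb_nonneg hp htrans) m)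
    split_ifs with hy
    · cases m with
      | zero => simp [visitProb, hy, hitProb_of_le]
      | succ m => exact this
    · exact this
  | n + 1, m, y => by
    have hstep : ∀ k, visitProb p R (n + 1) (k + 1) y ≤
        (E p y * hitProb p R (y + 1) + (1 - E p y) * hitProb p R (y - 1)) *
          returnProb p R ^ k := by
      intro k
      have h₁ := mul_le_mul_of_nonneg_left (visitProb_le hp htrans n k (y + 1)) (E_nonneg hp y)
      have h₂ := mul_le_mul_of_nonneg_left (visitProb_le hp htrans n k (y - 1))
        (sub_nonneg.mpr (E_le_one hp y))
      rw [visitProb]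
      linarith
    split_ifs with hy
    · subst hy
      cases m with
      | zero => simp [visitProb, hitProb_of_le]
      | succ k =>
        calc _ ≤ _ := hstep k
          _ = _ := by rw [mean_hitProb_self hp htrans, hitProb_of_le le_rfl]; ring
    · exact (hstep m).trans (mul_le_mul_of_nonneg_right (hitProb_superharmonic hp htrans y)
        (pow_nonneg (returnProb_nonneg hp htrans) m))

variable {Ω : Type*}

def visitCount (X : ℕ → Ω → ℕ) (R a b : ℕ) (ω : Ω) : ℕ := #{k ∈ Icc a b | X k ω = R}

lemma visitCount_mono {X : ℕ → Ω → ℕ} {a b c : ℕ} (h : b ≤ c) (ω : Ω) :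
    visitCount X R a b ω ≤ visitCount X R a c ω :=
  card_le_card (filter_subset_filter _ (Icc_subset_Icc_right h))

lemma visitCount_eq_ite_add {X : ℕ → Ω → ℕ} {a b : ℕ} (h : a ≤ b) (ω : Ω) :
    visitCount X R a b ω = (if X a ω = R then 1 else 0) + visitCount X R (a + 1) b ω := by
  rw [visitCount, ← insert_Icc_add_one_left_eq_Icc h, filter_insert]
  split_ifs
  · rw [card_insert_of_notMem (by simp), add_comm]; rfl
  · rw [zero_add]; rfl

lemma prod_step_update (u : ℕ → ℕ) (t y : ℕ) :
    ∏ k ∈ range (t + 1), step p (Function.update u (t + 1) y k)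
        (Function.update u (t + 1) y (k + 1)) =
      (∏ k ∈ range t, step p (u k) (u (k + 1))) * step p (u t) y := by
  rw [prod_range_succ, Function.update_self, Function.update_of_ne (by omega)]
  congr 1
  refine prod_congr rfl fun k hk => ?_
  have := mem_range.mp hk
  rw [Function.update_of_ne (by omega), Function.update_of_ne (by omega)]

lemma prefix_visitCount_subset_iUnion (X : ℕ → Ω → ℕ) (u : ℕ → ℕ) (n m t : ℕ) :
    {ω | (∀ k ≤ t, X k ω = u k) ∧ m + 1 ≤ visitCount X R (t + 1) (t + (n + 1)) ω} ⊆
      ⋃ y, {ω | (∀ k ≤ t + 1, X k ω = Function.update u (t + 1) y k) ∧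
        (if y = R then m else m + 1) ≤ visitCount X R (t + 1 + 1) (t + 1 + n) ω} := by
  rintro ω ⟨hu, hcount⟩
  refine Set.mem_iUnion.mpr ⟨X (t + 1) ω, fun k hk => ?_, ?_⟩
  · rcases hk.lt_or_eq with hk | rfl
    · rw [Function.update_of_ne hk.ne, hu k (by omega)]
    · rw [Function.update_self]
  · rw [visitCount_eq_ite_add (by omega), show t + (n + 1) = t + 1 + n by omega] at hcount
    split_ifs at hcount ⊢ <;> omega

lemma localTime_le_of_visitCount_le {X : ℕ → Ω → ℕ} {ω : Ω} {m : ℕ} (h₀ : X 0 ω ≠ R)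
    (h : ∀ n, visitCount X R 1 n ω ≤ m) : localTime X R ω ≤ m := by
  refine ENNReal.tsum_le_of_sum_range_le fun n => ?_
  have hsub : {k ∈ range n | X k ω = R} ⊆ {k ∈ Icc 1 n | X k ω = R} := by
    intro k hk
    simp only [mem_filter, mem_range, mem_Icc] at hk ⊢
    have : k ≠ 0 := by rintro rfl; exact h₀ hk.2
    omega
  simp only [Set.indicator_apply, Set.mem_ofPred_eq, sum_boole]
  exact Nat.cast_le.mpr ((card_le_card hsub).trans (h n))

variable [MeasurableSpace Ω] {P : Measure Ω} {X : ℕ → Ω → ℕ}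

lemma measure_prefix_visitCount_le (hp : ∀ i, 1 ≤ i → 0 ≤ p i ∧ p i < 1 / 2) {b : ℕ}
    (hX : IsNNWalk P X p b) (n : ℕ) :
    ∀ m t (u : ℕ → ℕ), u 0 = b →
      P {ω | (∀ k ≤ t, X k ω = u k) ∧ m ≤ visitCount X R (t + 1) (t + n) ω} ≤
        ENNReal.ofReal ((∏ k ∈ range t, step p (u k) (u (k + 1))) * visitProb p R n m (u t)) := by
  induction n with
  | zero =>
    rintro (_ | m) t u hu
    · rw [visitProb_zero, mul_one, ← hX.2 t u hu]
      exact measure_mono fun ω h => h.1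
    · refine (measure_mono (t := ∅) ?_).trans (by simp)
      rintro ω ⟨-, h⟩
      simp [visitCount] at h
  | succ n ih =>
    rintro (_ | m) t u hu
    · rw [visitProb_zero, mul_one, ← hX.2 t u hu]
      exact measure_mono fun ω h => h.1
    set w := ∏ k ∈ range t, step p (u k) (u (k + 1))
    have hw : 0 ≤ w := prod_nonneg fun k _ => step_nonneg hp _ _
    have hV (y : ℕ) : 0 ≤ w * visitProb p R n (if y = R then m else m + 1) y :=
      mul_nonneg hw (visitProb_nonneg hp _ _ _)
    calc _ ≤ P (⋃ y, {ω | (∀ k ≤ t + 1, X k ω = Function.update u (t + 1) y k) ∧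
            (if y = R then m else m + 1) ≤ visitCount X R (t + 1 + 1) (t + 1 + n) ω}) :=
          measure_mono (prefix_visitCount_subset_iUnion X u n m t)
      _ ≤ ∑' y, P {ω | (∀ k ≤ t + 1, X k ω = Function.update u (t + 1) y k) ∧
            (if y = R then m else m + 1) ≤ visitCount X R (t + 1 + 1) (t + 1 + n) ω} :=
          measure_iUnion_le _
      _ ≤ ∑' y, ENNReal.ofReal (step p (u t) y *
            (w * visitProb p R n (if y = R then m else m + 1) y)) := by
          refine ENNReal.tsum_le_tsum fun y => ?_
          have := ih (if y = R then m else m + 1) (t + 1) (Function.update u (t + 1) y)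
            (by rwa [Function.update_of_ne (by omega)])
          rwa [prod_step_update, Function.update_self, mul_comm w, mul_assoc] at this
      _ = ENNReal.ofReal (w * visitProb p R (n + 1) (m + 1) (u t)) := by
          rw [tsum_ofReal_step_mul hp _ hV, visitProb]
          ring_nf

lemma measure_visitCount_gt_le (hp : ∀ i, 1 ≤ i → 0 ≤ p i ∧ p i < 1 / 2)
    (htrans : Dinf p 0 < ⊤) (hX : IsNNWalk P X p 0) (hR : 1 ≤ R) (m : ℕ) :
    P {ω | ∃ n, m < visitCount X R 1 n ω} ≤ ENNReal.ofReal (returnProb p R ^ m) := by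
  have hmono : Monotone fun n => {ω | m < visitCount X R 1 n ω} :=
    fun a b hab ω hω => hω.trans_le (visitCount_mono hab ω)
  rw [Set.ofPred_exists, hmono.measure_iUnion]
  refine iSup_le fun n => ?_
  have hstart : {ω | m < visitCount X R 1 n ω} =
      {ω | (∀ k ≤ 0, X k ω = 0) ∧ m + 1 ≤ visitCount X R (0 + 1) (0 + n) ω} := by
    ext ω
    simp [hX.1 ω]
  have hvisit := visitProb_le (R := R) hp htrans n m 0
  rw [if_neg (by omega), hitProb_of_le (Nat.zero_le R), one_mul] at hvisit
  rw [hstart]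
  refine (measure_prefix_visitCount_le hp hX n (m + 1) 0 (fun _ => 0) rfl).trans ?_
  simpa using ENNReal.ofReal_le_ofReal hvisit

lemma returnProb_pow_floor_le (hp : ∀ i, 1 ≤ i → 0 ≤ p i ∧ p i < 1 / 2) (htrans : Dinf p 0 < ⊤)
    (hR : 1 ≤ R) (ε : ℝ) :
    returnProb p R ^ ⌊2 * (1 + ε) * (Dinf p R).toReal * Real.log R⌋₊ ≤
      Real.exp 1 * (R : ℝ) ^ (-(1 + ε)) := by
  set D := (Dinf p R).toReal
  set M := ⌊2 * (1 + ε) * D * Real.log R⌋₊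
  set z := E p R / D
  have hD : 1 ≤ D := one_le_toReal_Dinf hp htrans R
  have hE : 1 / 2 ≤ E p R := one_half_le_E hp hR
  have hz : z ≤ 1 := div_le_one_of_le₀ ((E_le_one hp R).trans hD) (by linarith)
  have hlog : 0 ≤ Real.log R := Real.log_nonneg (by exact_mod_cast hR)
  have hzM : (1 + ε) * Real.log R - 1 ≤ z * M := by
    have hfloor : 2 * (1 + ε) * D * Real.log R - 1 ≤ M := (Nat.sub_one_lt_floor _).le
    have hzD : z * D = E p R := div_mul_cancel₀ _ (by linarith)
    have := mul_le_mul_of_nonneg_left hfloor (div_nonneg (by linarith) (by linarith) : 0 ≤ z)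
    nlinarith
  calc returnProb p R ^ M ≤ Real.exp (-z) ^ M :=
        pow_le_pow_left₀ (returnProb_nonneg hp htrans) (by
          rw [returnProb]; linarith [Real.add_one_le_exp (-z)]) M
    _ = Real.exp (-(z * M)) := by rw [← Real.exp_nat_mul]; ring_nf
    _ ≤ Real.exp (1 + -(1 + ε) * Real.log R) := Real.exp_le_exp.mpr (by linarith)
    _ = Real.exp 1 * (R : ℝ) ^ (-(1 + ε)) := by
        rw [Real.exp_add, Real.rpow_def_of_pos (by exact_mod_cast hR), mul_comm (Real.log R)]

lemma tsum_measure_visitCount_gt_ne_top (hp : ∀ i, 1 ≤ i → 0 ≤ p i ∧ p i < 1 / 2)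
    (htrans : Dinf p 0 < ⊤) (hX : IsNNWalk P X p 0) {ε : ℝ} (hε : 0 < ε) :
    ∑' R : ℕ, P {ω | 1 ≤ R ∧
      ∃ n, ⌊2 * (1 + ε) * (Dinf p R).toReal * Real.log R⌋₊ < visitCount X R 1 n ω} ≠ ⊤ := by
  have hsum : Summable fun R : ℕ => Real.exp 1 * (R : ℝ) ^ (-(1 + ε)) :=
    (Real.summable_nat_rpow.mpr (by linarith)).mul_left _
  refine ne_top_of_le_ne_top hsum.tsum_ofReal_ne_top (ENNReal.tsum_le_tsum fun R => ?_)
  by_cases hR : 1 ≤ R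
  · simp only [hR, true_and]
    exact (measure_visitCount_gt_le hp htrans hX hR _).trans
      (ENNReal.ofReal_le_ofReal (returnProb_pow_floor_le hp htrans hR ε))
  · simp [hR]

end NNRW

open NNRW
theorem stmt11_general (p : ℕ → ℝ) (hp : ∀ i, 1 ≤ i → 0 ≤ p i ∧ p i < 1 / 2)
    (htrans : Dinf p 0 < ⊤)
    (Ω : Type) [MeasurableSpace Ω] (P : Measure Ω)
    (X : ℕ → Ω → ℕ) (hX : IsNNWalk P X p 0) :
    ∀ ε : ℝ, 0 < ε → ∀ᵐ ω ∂P, ∀ᶠ R : ℕ in atTop,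
      localTime X R ω ≤
        ENNReal.ofReal (2 * (1 + ε)) * Dinf p R * ENNReal.ofReal (Real.log (R : ℝ)) := by
  intro ε hε
  filter_upwards [ae_eventually_notMem (tsum_measure_visitCount_gt_ne_top hp htrans hX hε)]
    with ω hω
  filter_upwards [hω, eventually_ge_atTop 1] with R hRω hR
  have hε₂ : (0 : ℝ) ≤ 2 * (1 + ε) := by linarith
  have hD : 0 ≤ (Dinf p R).toReal := ENNReal.toReal_nonneg
  have hlog : 0 ≤ Real.log R := Real.log_nonneg (by exact_mod_cast hR)
  calc localTime X R ω ≤ (⌊2 * (1 + ε) * (Dinf p R).toReal * Real.log R⌋₊ : ℕ) :=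
        localTime_le_of_visitCount_le (by rw [hX.1 ω]; omega) fun n =>
          not_lt.mp fun hn => hRω ⟨hR, n, hn⟩
    _ ≤ ENNReal.ofReal (2 * (1 + ε) * (Dinf p R).toReal * Real.log R) := by
        rw [← ENNReal.ofReal_natCast]
        exact ENNReal.ofReal_le_ofReal (Nat.floor_le (by positivity))
    _ = _ := by
        rw [ENNReal.ofReal_mul (by positivity), ENNReal.ofReal_mul hε₂,
          ENNReal.ofReal_toReal (Dinf_ne_top hp htrans R)]

/-- for a transient chain with `p_R → 0`, a.s.
`ξ(R,∞) ≤ 2(1+ε) D(R,∞) log R` for all large `R`. -/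
theorem stmt11 (p : ℕ → ℝ) (hp : ∀ i, 1 ≤ i → 0 ≤ p i ∧ p i < 1 / 2)
    (htrans : Dinf p 0 < ⊤) (hplim : Tendsto p atTop (𝓝 0))
    (Ω : Type) [MeasurableSpace Ω] (P : Measure Ω) [IsProbabilityMeasure P]
    (X : ℕ → Ω → ℕ) (hX : IsNNWalk P X p 0) :
    ∀ ε : ℝ, 0 < ε → ∀ᵐ ω ∂P, ∀ᶠ R : ℕ in atTop,
      localTime X R ω ≤
        ENNReal.ofReal (2 * (1 + ε)) * Dinf p R * ENNReal.ofReal (Real.log (R : ℝ)) :=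
  stmt11_general p hp htrans Ω P X hX
end
end
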